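/- arXiv:math/0503519 — 2 statements merged into one kernel-verified Lean document; each statement's English description precedes it below -/
import Mathlib

section
/- Fix a real $u \le 0$. Define $\beta_m(u)$ for $m \geq 0$ by $\beta_0(u) = e^{u/2}$ and $\frac{d\beta_m}{du} = \frac{1}{2}(\beta_{m-1}(u) + e^{u/2}\gamma_{m-1}(u))$ with $\beta_m(0) = 1$, where $\gamma_m(u) = \frac{1}{2}\frac{u^{m+1}}{(m+1)!} + \sum_{n=0}^{m}\frac{u^n}{n!}$. Then $\beta_m(u) = \frac{1}{2}\left(1 + \sum_{n=0}^{m}\frac{u^n}{n!}\right)e^{u/2}$. -/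
/-! The closed form `(1 + Sₘ(u)) e^{u/2} / 2`, with `Sₘ` the degree-`m` Taylor polynomial of `exp`,
satisfies the same recursion: `S'ₘ₊₁ = Sₘ` and `Sₘ₊₁ = Sₘ + u^{m+1}/(m+1)!` make its derivative
equal to the prescribed one, and `Sₘ(0) = 1`. Two functions with the same derivative that agree
at `0` coincide, so induction on `m` identifies `βₘ` with the closed form. -/

open Finset Real

theorem eq_of_hasDerivAt_eq {E : Type*} [NormedAddCommGroup E] [NormedSpace ℝ E]
    {f g f' : ℝ → E} (hf : ∀ x, HasDerivAt f (f' x) x) (hg : ∀ x, HasDerivAt g (f' x) x)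
    (a : ℝ) (hfg : f a = g a) : f = g :=
  eq_of_fderiv_eq (fun x => (hf x).differentiableAt) (fun x => (hg x).differentiableAt)
    (fun x => (hf x).hasFDerivAt.fderiv.trans (hg x).hasFDerivAt.fderiv.symm) a hfg

noncomputable def expPartialSum (m : ℕ) (u : ℝ) : ℝ :=
  ∑ n ∈ range (m + 1), u ^ n / (n.factorial : ℝ)

namespace expPartialSum

theorem zero_left (u : ℝ) : expPartialSum 0 u = 1 := by
  simp [expPartialSum]

theorem succ (m : ℕ) (u : ℝ) :
    expPartialSum (m + 1) u = expPartialSum m u + u ^ (m + 1) / ((m + 1).factorial : ℝ) :=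
  sum_range_succ _ _

theorem apply_zero (m : ℕ) : expPartialSum m 0 = 1 := by
  simp [expPartialSum, sum_range_succ']

theorem hasDerivAt_succ (m : ℕ) (u : ℝ) :
    HasDerivAt (expPartialSum (m + 1)) (expPartialSum m u) u := by
  have hterms : HasDerivAt (expPartialSum (m + 1))
      (∑ n ∈ range (m + 2), (n : ℝ) * u ^ (n - 1) / (n.factorial : ℝ)) u :=
    HasDerivAt.fun_sum fun n _ => (hasDerivAt_pow n u).div_const _
  convert hterms using 1
  rw [sum_range_succ', expPartialSum]
  simp only [Nat.cast_zero, zero_mul, zero_div, add_zero, Nat.add_sub_cancel,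
    Nat.factorial_succ, Nat.cast_mul]
  refine sum_congr rfl fun n _ => ?_
  field_simp

end expPartialSum

noncomputable def betaClosedForm (m : ℕ) (u : ℝ) : ℝ :=
  (1 + expPartialSum m u) * exp (u / 2) / 2

namespace betaClosedForm

theorem zero_left (u : ℝ) : betaClosedForm 0 u = exp (u / 2) := by
  simp only [betaClosedForm, expPartialSum.zero_left]
  ring

theorem succ_apply_zero (m : ℕ) : betaClosedForm (m + 1) 0 = 1 := by
  simp [betaClosedForm, expPartialSum.apply_zero]

theorem hasDerivAt_succ (m : ℕ) (u : ℝ) :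
    HasDerivAt (betaClosedForm (m + 1))
      ((betaClosedForm m u + exp (u / 2) *
        (u ^ (m + 1) / (2 * ((m + 1).factorial : ℝ)) + expPartialSum m u)) / 2) u := by
  have hexp : HasDerivAt (fun u => exp (u / 2)) (exp (u / 2) / 2) u := by
    simpa [div_eq_mul_inv] using ((hasDerivAt_id u).div_const 2).exp
  refine ((((expPartialSum.hasDerivAt_succ m u).const_add 1).mul hexp).div_const 2).congr_deriv ?_
  rw [betaClosedForm, expPartialSum.succ]
  ring

end betaClosedForm

/-- If `β₀(u) = e^{u/2}`, `dβ_m/du = (β_{m-1} + e^{u/2} γ_{m-1})/2` with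
`β_m(0) = 1` for `m ≥ 1`, where `γ_m(u) = u^{m+1}/(2(m+1)!) + ∑_{n≤m} u^n/n!`,
then `β_m(u) = (1 + ∑_{n≤m} u^n/n!) e^{u/2} / 2`. -/
theorem stmt8 (B : ℕ → ℝ → ℝ)
    (h0 : ∀ u : ℝ, B 0 u = Real.exp (u / 2))
    (hderiv : ∀ m : ℕ, ∀ u : ℝ, HasDerivAt (B (m + 1))
      ((B m u + Real.exp (u / 2) *
        (u ^ (m + 1) / (2 * ((m + 1).factorial : ℝ))
          + ∑ n ∈ Finset.range (m + 1), u ^ n / (n.factorial : ℝ))) / 2) u)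
    (hinit : ∀ m : ℕ, B (m + 1) 0 = 1) :
    ∀ u : ℝ, u ≤ 0 → ∀ m : ℕ,
      B m u = (1 + ∑ n ∈ Finset.range (m + 1), u ^ n / (n.factorial : ℝ))
        * Real.exp (u / 2) / 2 := by
  suffices h : ∀ m, B m = betaClosedForm m from fun u _ m => congrFun (h m) u
  intro m
  induction m with
  | zero => exact funext fun u => (h0 u).trans (betaClosedForm.zero_left u).symm
  | succ m ih =>
    refine eq_of_hasDerivAt_eq (hderiv m) (fun u => ?_) 0
      ((hinit m).trans (betaClosedForm.succ_apply_zero m).symm)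
    rw [ih]
    exact betaClosedForm.hasDerivAt_succ m u
end

section
/- Let $a, b, c$ be real constants with $c \neq 0$, and suppose $(\beta_m)_{m \geq 1}$ are real functions of $v$ satisfying $\beta_1(v) = a - b e^{v/c}$, $\frac{d\beta_m}{dv} = \beta_{m-1}$ for $m \geq 2$, and $\beta_m(0) = 1$ for all $m \geq 2$ (with $a - b = 1$). Then $\beta_m(v) = \frac{a v^{m-1}}{(m-1)!} + \sum_{j=0}^{m-2}\frac{v^j}{j!} - b c^{m-1}\sum_{j=m-1}^{\infty}\frac{(v/c)^j}{j!}$ for all $m \geq 1$. -/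
/-!
Write `expTail n x = exp x - ∑_{j<n} x^j/j!` for the tail of the exponential series. Since
`d/dx (x^{n+1}/(n+1)!) = x^n/n!`, both the truncated exponential series and its tail satisfy
`f_{n+1}' = f_n`, and so does the candidate `G_n(v) = a v^n/n! + ∑_{j<n} v^j/j! - b c^n expTail n (v/c)`
(the factor `c^n` absorbs the chain-rule factor `1/c`). A hierarchy `f_{n+1}' = f_n` is determined
by `f_0` and the values `f_{n+1}(0)`, and `G` matches `β_{n+1}` in both.
-/

open Finset

lemma hasDerivAt_pow_succ_div_factorial (n : ℕ) (x : ℝ) :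
    HasDerivAt (fun x : ℝ => x ^ (n + 1) / ((n + 1).factorial : ℝ))
      (x ^ n / (n.factorial : ℝ)) x := by
  refine ((hasDerivAt_pow (n + 1) x).div_const ((n + 1).factorial : ℝ)).congr_deriv ?_
  rw [Nat.factorial_succ]
  push_cast
  field_simp

lemma hasDerivAt_sum_range_succ_pow_div_factorial (n : ℕ) (x : ℝ) :
    HasDerivAt (fun x : ℝ => ∑ j ∈ range (n + 1), x ^ j / (j.factorial : ℝ))
      (∑ j ∈ range n, x ^ j / (j.factorial : ℝ)) x := by
  simp_rw [sum_range_succ' _ n, pow_zero, Nat.factorial_zero, Nat.cast_one, div_one]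
  exact (HasDerivAt.fun_sum fun j _ => hasDerivAt_pow_succ_div_factorial j x).add_const 1

noncomputable def expTail (n : ℕ) (x : ℝ) : ℝ :=
  Real.exp x - ∑ j ∈ range n, x ^ j / (j.factorial : ℝ)

lemma tsum_pow_add_div_factorial (n : ℕ) (x : ℝ) :
    ∑' j : ℕ, x ^ (j + n) / ((j + n).factorial : ℝ) = expTail n x := by
  have hexp : Real.exp x = ∑' j : ℕ, x ^ j / (j.factorial : ℝ) := by
    rw [Real.exp_eq_exp_ℝ, NormedSpace.exp_eq_tsum_div]
  rw [expTail, hexp, ← (Real.summable_pow_div_factorial x).sum_add_tsum_nat_add n, add_sub_cancel_left]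

lemma hasDerivAt_expTail (n : ℕ) (x : ℝ) : HasDerivAt (expTail (n + 1)) (expTail n x) x :=
  (Real.hasDerivAt_exp x).sub (hasDerivAt_sum_range_succ_pow_div_factorial n x)

lemma expTail_succ_zero (n : ℕ) : expTail (n + 1) 0 = 0 := by
  simp [expTail, sum_range_succ']

lemma eq_of_hasDerivAt_succ {f g : ℕ → ℝ → ℝ}
    (hf : ∀ n v, HasDerivAt (f (n + 1)) (f n v) v) (hg : ∀ n v, HasDerivAt (g (n + 1)) (g n v) v)
    (h₀ : f 0 = g 0) (hinit : ∀ n, f (n + 1) 0 = g (n + 1) 0) : f = g := by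
  funext n
  induction n with
  | zero => exact h₀
  | succ n ih =>
    have hderiv : ∀ v, HasDerivAt (f (n + 1) - g (n + 1)) 0 v := fun v => by
      simpa [ih] using (hf n v).sub (hg n v)
    funext v
    have := is_const_of_deriv_eq_zero (fun x => (hderiv x).differentiableAt)
      (fun x => (hderiv x).deriv) v 0
    simpa [hinit n, sub_eq_zero] using this

noncomputable def hierarchySolution (a b c : ℝ) (n : ℕ) (v : ℝ) : ℝ :=
  a * v ^ n / (n.factorial : ℝ) + ∑ j ∈ range n, v ^ j / (j.factorial : ℝ)
    - b * c ^ n * expTail n (v / c)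

lemma hierarchySolution_zero (a b c v : ℝ) :
    hierarchySolution a b c 0 v = a - b * Real.exp (v / c) := by
  simp [hierarchySolution, expTail]

lemma hierarchySolution_succ_zero (a b c : ℝ) (n : ℕ) : hierarchySolution a b c (n + 1) 0 = 1 := by
  simp [hierarchySolution, expTail_succ_zero, sum_range_succ']

lemma hasDerivAt_hierarchySolution {c : ℝ} (hc : c ≠ 0) (a b : ℝ) (n : ℕ) (v : ℝ) :
    HasDerivAt (hierarchySolution a b c (n + 1)) (hierarchySolution a b c n v) v := by
  have hscale : HasDerivAt (fun v : ℝ => v / c) c⁻¹ v := by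
    simpa using (hasDerivAt_id v).div_const c
  have htail := ((hasDerivAt_expTail n (v / c)).comp v hscale).const_mul (b * c ^ (n + 1))
  unfold hierarchySolution
  simp_rw [mul_div_assoc]
  refine ((((hasDerivAt_pow_succ_div_factorial n v).const_mul a).add
    (hasDerivAt_sum_range_succ_pow_div_factorial n v)).sub htail).congr_deriv ?_
  field_simp
  ring

theorem stmt11_general (a b c : ℝ) (hc : c ≠ 0) (B : ℕ → ℝ → ℝ)
    (h1 : ∀ v : ℝ, B 1 v = a - b * Real.exp (v / c))
    (hderiv : ∀ m : ℕ, 2 ≤ m → ∀ v : ℝ, HasDerivAt (B m) (B (m - 1) v) v)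
    (hinit : ∀ m : ℕ, 2 ≤ m → B m 0 = 1) :
    ∀ m : ℕ, 1 ≤ m → ∀ v : ℝ,
      B m v = a * v ^ (m - 1) / ((m - 1).factorial : ℝ)
        + ∑ j ∈ Finset.range (m - 1), v ^ j / (j.factorial : ℝ)
        - b * c ^ (m - 1) *
            ∑' j : ℕ, (v / c) ^ (j + (m - 1)) / ((j + (m - 1)).factorial : ℝ) := by
  have hB : (fun n => B (n + 1)) = hierarchySolution a b c :=
    eq_of_hasDerivAt_succ (fun n => hderiv (n + 2) (by omega)) (hasDerivAt_hierarchySolution hc a b)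
      (funext fun v => (h1 v).trans (hierarchySolution_zero a b c v).symm)
      (fun n => (hinit (n + 2) (by omega)).trans (hierarchySolution_succ_zero a b c n).symm)
  intro m hm v
  obtain ⟨n, rfl⟩ := Nat.exists_eq_add_of_le' hm
  rw [Nat.add_sub_cancel, tsum_pow_add_div_factorial, ← hierarchySolution]
  exact congrFun (congrFun hB n) v

/-- General solution of the hierarchy `β₁(v) = a - b e^{v/c}`, `dβ_m/dv = β_{m-1}`,
`β_m(0) = 1` (`m ≥ 2`), with `a - b = 1`:
`β_m(v) = a v^{m-1}/(m-1)! + ∑_{j=0}^{m-2} v^j/j! - b c^{m-1} ∑_{j≥m-1} (v/c)^j/j!`. -/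
theorem stmt11 (a b c : ℝ) (hc : c ≠ 0) (hab : a - b = 1) (B : ℕ → ℝ → ℝ)
    (h1 : ∀ v : ℝ, B 1 v = a - b * Real.exp (v / c))
    (hderiv : ∀ m : ℕ, 2 ≤ m → ∀ v : ℝ, HasDerivAt (B m) (B (m - 1) v) v)
    (hinit : ∀ m : ℕ, 2 ≤ m → B m 0 = 1) :
    ∀ m : ℕ, 1 ≤ m → ∀ v : ℝ,
      B m v = a * v ^ (m - 1) / ((m - 1).factorial : ℝ)
        + ∑ j ∈ Finset.range (m - 1), v ^ j / (j.factorial : ℝ)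
        - b * c ^ (m - 1) *
            ∑' j : ℕ, (v / c) ^ (j + (m - 1)) / ((j + (m - 1)).factorial : ℝ) :=
  stmt11_general a b c hc B h1 hderiv hinit
end
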